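/- Let p : ℝ × ℝ → ℝ be smooth, written p = p(x, t) with partial derivatives p_x, p_t, p_xx, p_xxx. For m ∈ ℝ define smooth maps U_m, V_m : ℝ × ℝ → Matrix(Fin 2, Fin 2, ℝ) by U_m := [[0, p + m], [1, 0]] and V_m := [[−p_x/2, −p_xx/2 + (p − 2m)(p + m)], [p − 2m, p_x/2]] (rows listed top to bottom). Then the zero-curvature equation ∂_x V_m − ∂_t U_m + U_m·V_m − V_m·U_m = 0 holds identically on ℝ × ℝ for every m ∈ ℝ if and only if p satisfies the KdV equation p_t = −p_xxx/2 + 3·p·p_x. (This is the zero-curvature representation, in the frame (ψ, ψ_x) of a normalised lift, of the pencil of flat connections associated to an isothermic curve in ℝP¹ with projective curvature p evolving by f_t = p·f_x.) -/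

import Mathlib

/-- Partial derivative in the first (space) variable `x`. -/
noncomputable def pdx (f : ℝ × ℝ → ℝ) (z : ℝ × ℝ) : ℝ := fderiv ℝ f z (1, 0)

/-- Partial derivative in the second (time) variable `t`. -/
noncomputable def pdt (f : ℝ × ℝ → ℝ) (z : ℝ × ℝ) : ℝ := fderiv ℝ f z (0, 1)

/-- The matrix `U_m = [[0, p + m], [1, 0]]` of the AKNS-type pencil of connections
attached to an isothermic curve in `ℝP¹` with projective curvature `p`. -/
noncomputable def Umat (p : ℝ × ℝ → ℝ) (m : ℝ) (z : ℝ × ℝ) : Matrix (Fin 2) (Fin 2) ℝ :=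
  !![0, p z + m; 1, 0]

/-- The matrix `V_m = [[−p_x/2, −p_xx/2 + (p − 2m)(p + m)], [p − 2m, p_x/2]]`. -/
noncomputable def Vmat (p : ℝ × ℝ → ℝ) (m : ℝ) (z : ℝ × ℝ) : Matrix (Fin 2) (Fin 2) ℝ :=
  !![-(pdx p z) / 2, -(pdx (pdx p) z) / 2 + (p z - 2 * m) * (p z + m);
     p z - 2 * m, (pdx p z) / 2]

/-! All entries of the curvature `∂ₓV_m − ∂ₜU_m + [U_m, V_m]` vanish identically except the
upper-right one, in which every `m`-dependent term cancels, leaving minus the KdV residual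
`p_t + p_xxx/2 − 3 p p_x`. -/

section PartialDerivatives

variable {f g : ℝ × ℝ → ℝ} {z : ℝ × ℝ}

theorem ContDiff.pdx {n : WithTop ℕ∞} (hf : ContDiff ℝ (n + 1) f) : ContDiff ℝ n (pdx f) :=
  (hf.fderiv_right le_rfl).clm_apply contDiff_const

@[simp]
theorem pdt_const (c : ℝ) : pdt (fun _ => c) z = 0 := by
  simp [pdt]

theorem pdx_add (hf : DifferentiableAt ℝ f z) (hg : DifferentiableAt ℝ g z) :
    pdx (fun w => f w + g w) z = pdx f z + pdx g z := by
  simp [pdx, fderiv_fun_add hf hg]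

theorem pdx_mul (hf : DifferentiableAt ℝ f z) (hg : DifferentiableAt ℝ g z) :
    pdx (fun w => f w * g w) z = f z * pdx g z + g z * pdx f z := by
  simp [pdx, fderiv_fun_mul hf hg]

@[simp]
theorem pdx_add_const (f : ℝ × ℝ → ℝ) (c : ℝ) : pdx (fun w => f w + c) z = pdx f z := by
  simp [pdx, fderiv_add_const]

@[simp]
theorem pdt_add_const (f : ℝ × ℝ → ℝ) (c : ℝ) : pdt (fun w => f w + c) z = pdt f z := by
  simp [pdt, fderiv_add_const]

@[simp]
theorem pdx_sub_const (f : ℝ × ℝ → ℝ) (c : ℝ) : pdx (fun w => f w - c) z = pdx f z := by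
  simp [pdx, fderiv_sub_const]

@[simp]
theorem pdx_neg (f : ℝ × ℝ → ℝ) : pdx (fun w => -f w) z = -pdx f z := by
  simp [pdx, fderiv_fun_neg]

@[simp]
theorem pdx_div_const (f : ℝ × ℝ → ℝ) (c : ℝ) : pdx (fun w => f w / c) z = pdx f z / c := by
  have h : (fun w => f w / c) = c⁻¹ • f := by ext; simp [div_eq_inv_mul]
  rw [pdx, h, fderiv_const_smul_field]
  simp [pdx, div_eq_inv_mul]

end PartialDerivatives

noncomputable def curvature (p : ℝ × ℝ → ℝ) (m : ℝ) (z : ℝ × ℝ) : Matrix (Fin 2) (Fin 2) ℝ :=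
  Matrix.of fun i j => pdx (fun w => Vmat p m w i j) z - pdt (fun w => Umat p m w i j) z +
    (Umat p m z * Vmat p m z - Vmat p m z * Umat p m z) i j

noncomputable def kdvResidual (p : ℝ × ℝ → ℝ) (z : ℝ × ℝ) : ℝ :=
  pdt p z - (-pdx (pdx (pdx p)) z / 2 + 3 * p z * pdx p z)

theorem curvature_eq {p : ℝ × ℝ → ℝ} (hp : ContDiff ℝ 3 p) (m : ℝ) (z : ℝ × ℝ) :
    curvature p m z = !![0, -kdvResidual p z; 0, 0] := by
  have hp₀ : DifferentiableAt ℝ p z := hp.differentiable (by norm_num) z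
  have hpxx : ContDiff ℝ 1 (pdx (pdx p)) := hp.pdx.pdx
  have hp₂ : DifferentiableAt ℝ (pdx (pdx p)) z := hpxx.differentiable one_ne_zero z
  ext i j
  fin_cases i <;> fin_cases j <;>
    simp (disch := fun_prop) [curvature, Umat, Vmat, kdvResidual, pdx_add, pdx_mul] <;> ring

theorem curvature_eq_zero_iff {p : ℝ × ℝ → ℝ} (hp : ContDiff ℝ 3 p) (m : ℝ) (z : ℝ × ℝ) :
    curvature p m z = 0 ↔ kdvResidual p z = 0 := by
  rw [curvature_eq hp, ← Matrix.ext_iff]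
  simp [Fin.forall_fin_two]

/-- **Zero-curvature representation of the KdV equation.**  The zero-curvature
equation `∂ₓV_m − ∂ₜU_m + U_m V_m − V_m U_m = 0` holds for every `m ∈ ℝ` if and
only if `p` satisfies the KdV equation `p_t = −p_xxx/2 + 3 p p_x`. -/
theorem kdv_zero_curvature (p : ℝ × ℝ → ℝ) (hp : ContDiff ℝ (⊤ : ℕ∞) p) :
    (∀ m : ℝ, ∀ z : ℝ × ℝ, ∀ i j : Fin 2,
      pdx (fun w => Vmat p m w i j) z - pdt (fun w => Umat p m w i j) z +
        (Umat p m z * Vmat p m z - Vmat p m z * Umat p m z) i j = 0) ↔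
    (∀ z : ℝ × ℝ, pdt p z = -(pdx (pdx (pdx p)) z) / 2 + 3 * p z * pdx p z) := by
  have hp₃ : ContDiff ℝ 3 p := hp.of_le (WithTop.coe_le_coe.2 le_top)
  change (∀ m z i j, curvature p m z i j = (0 : Matrix (Fin 2) (Fin 2) ℝ) i j) ↔ _
  simp only [Matrix.ext_iff, curvature_eq_zero_iff hp₃, forall_const, kdvResidual, sub_eq_zero]
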